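/- arXiv:math/0604412 — 7 statements merged into one kernel-verified Lean document; each statement's English description precedes it below -/
import Mathlib

section
/- Let h : 𝒯 → 𝒜 be a homology theory that reflects isomorphisms and is full. Then the ideal 𝕀(X,Y) = { f ∈ Hom_𝒯(X,Y) | h(f) = 0 } is a square-zero ideal: for any morphisms f : X → Y and g : Y → Z in 𝒯 with h(f) = 0 and h(g) = 0, the composite g ∘ f = 0. -/
/-!
If `h(f) = 0`, the second morphism `p : Y ⟶ C` of a distinguished triangle on `f` has `h(p)` mono,
so it suffices that every `g` with `h(g) = 0` factors through such a `p`: then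
`f ≫ g = f ≫ p ≫ t = 0`. To factor `g`, complete `m = (p, g) : Y ⟶ C ⊞ Z` to a
distinguished triangle `Y ⟶ C ⊞ Z ⟶ E ⟶ Y⟦1⟧`. Since `h(m)` is mono, `h` makes it short
exact, so `h(snd)`, which kills `h(m)` because `h(g) = 0`, descends along
`h(n) : h(C ⊞ Z) ⟶ h(E)`, and fullness lifts the descended map to `ρ : E ⟶ Z`. Then
`h(inr ≫ n ≫ ρ) = 𝟙`, so `ε = inr ≫ n ≫ ρ` is an automorphism of `Z`, and `m ≫ n = 0`
gives `g ≫ ε = -(p ≫ inl ≫ n ≫ ρ)`.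
-/

open CategoryTheory Category Limits Preadditive Pretriangulated

namespace CategoryTheory

variable {T : Type*} [Category T] [HasZeroObject T] [Preadditive T] [HasShift T ℤ]
  [∀ n : ℤ, (shiftFunctor T n).Additive] [Pretriangulated T]
  {A : Type*} [Category A] [Abelian A] [HasShift A ℤ]
  (h : T ⥤ A) [h.IsHomological]

lemma Functor.map_mor₃_eq_zero_of_mono_map_mor₁ [h.CommShift ℤ] {X Y Z : T} {u : X ⟶ Y}
    {v : Y ⟶ Z} {w : Z ⟶ X⟦(1 : ℤ)⟧} (hT : Triangle.mk u v w ∈ distTriang T)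
    [Mono (h.map u)] :
    h.map w = 0 := by
  have : Mono (h.map (u⟦(1 : ℤ)⟧')) := by
    have : Mono (h.map (u⟦(1 : ℤ)⟧') ≫ (h.commShiftIso (1 : ℤ)).hom.app Y) := by
      rw [h.commShiftIso_hom_naturality]
      infer_instance
    exact mono_of_mono _ ((h.commShiftIso (1 : ℤ)).hom.app Y)
  have hwu : w ≫ u⟦(1 : ℤ)⟧' = 0 := comp_distTriang_mor_zero₃₁ _ hT
  rw [← cancel_mono (h.map (u⟦(1 : ℤ)⟧')), ← h.map_comp, hwu, h.map_zero, zero_comp]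

lemma Functor.epi_map_mor₂_of_mono_map_mor₁ [h.CommShift ℤ] {X Y Z : T} {u : X ⟶ Y}
    {v : Y ⟶ Z} {w : Z ⟶ X⟦(1 : ℤ)⟧} (hT : Triangle.mk u v w ∈ distTriang T)
    [Mono (h.map u)] :
    Epi (h.map v) :=
  (h.map_distinguished_exact _ (rot_of_distTriang _ hT)).epi_f
    (h.map_mor₃_eq_zero_of_mono_map_mor₁ hT :)

lemma Functor.exists_map_mor₂_comp_eq [h.CommShift ℤ] [h.Full] {X Y Z : T} {u : X ⟶ Y}
    {v : Y ⟶ Z} {w : Z ⟶ X⟦(1 : ℤ)⟧} (hT : Triangle.mk u v w ∈ distTriang T)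
    [Mono (h.map u)] {W : T} (k : Y ⟶ W) (hk : h.map u ≫ h.map k = 0) :
    ∃ ρ : Z ⟶ W, h.map v ≫ h.map ρ = h.map k := by
  have hexact := h.map_distinguished_exact _ hT
  have : Epi ((shortComplexOfDistTriangle _ hT).map h).g :=
    (h.epi_map_mor₂_of_mono_map_mor₁ hT :)
  obtain ⟨ρ, hρ⟩ := h.map_surjective (hexact.desc (h.map k) hk)
  exact ⟨ρ, hρ ▸ hexact.g_desc (h.map k) hk⟩

lemma Functor.exists_comp_eq_of_mono_map_of_map_eq_zero [h.CommShift ℤ] [h.Full]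
    [h.ReflectsIsomorphisms] {Y C Z : T} (p : Y ⟶ C) [Mono (h.map p)] (g : Y ⟶ Z)
    (hg : h.map g = 0) : ∃ t : C ⟶ Z, p ≫ t = g := by
  let m : Y ⟶ C ⊞ Z := biprod.lift p g
  have hmp : h.map m ≫ h.map biprod.fst = h.map p := by rw [← h.map_comp, biprod.lift_fst]
  have : Mono (h.map m) := mono_of_mono_fac hmp
  obtain ⟨E, n, e, hT⟩ := distinguished_cocone_triangle m
  obtain ⟨ρ, hρ⟩ := h.exists_map_mor₂_comp_eq hT (biprod.snd : C ⊞ Z ⟶ Z)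
    (by rw [← h.map_comp, biprod.lift_snd, hg])
  have hε : h.map (biprod.inr ≫ n ≫ ρ) = 𝟙 (h.obj Z) := by
    rw [h.map_comp, h.map_comp, hρ, ← h.map_comp, biprod.inr_snd, h.map_id]
  have : IsIso (biprod.inr ≫ n ≫ ρ) :=
    (isIso_iff_of_reflects_iso _ h).mp (hε ▸ inferInstance)
  have hgε : g ≫ biprod.inr ≫ n ≫ ρ = -(p ≫ biprod.inl ≫ n ≫ ρ) := by
    have hmn : (p ≫ biprod.inl + g ≫ biprod.inr) ≫ n ≫ ρ = 0 := by
      rw [← biprod.lift_eq, ← assoc, show m ≫ n = 0 from comp_distTriang_mor_zero₁₂ _ hT,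
        zero_comp]
    rw [add_comp, assoc, assoc] at hmn
    exact eq_neg_of_add_eq_zero_right hmn
  refine ⟨-(biprod.inl ≫ n ≫ ρ) ≫ CategoryTheory.inv (biprod.inr ≫ n ≫ ρ), ?_⟩
  rw [← cancel_mono (biprod.inr ≫ n ≫ ρ), hgε]
  simp

end CategoryTheory

/-- If a homology theory `h : 𝒯 ⥤ 𝒜` on a pretriangulated category
reflects isomorphisms and is full, then the ideal of morphisms killed by `h` squares
to zero: `h(f) = 0` and `h(g) = 0` imply `f ≫ g = 0`. -/
theorem square_zero_ideal
    {T : Type*} [Category T] [HasZeroObject T] [Preadditive T] [HasShift T ℤ]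
    [∀ n : ℤ, (shiftFunctor T n).Additive] [Pretriangulated T]
    {A : Type*} [Category A] [Abelian A] [HasShift A ℤ]
    [∀ n : ℤ, (shiftFunctor A n).Additive]
    (h : T ⥤ A) [h.Additive] [h.CommShift ℤ] [h.IsHomological]
    [h.ReflectsIsomorphisms] [h.Full]
    {X Y Z : T} (f : X ⟶ Y) (g : Y ⟶ Z)
    (hf : h.map f = 0) (hg : h.map g = 0) :
    f ≫ g = 0 := by
  obtain ⟨C, p, δ, hT⟩ := distinguished_cocone_triangle f
  have : Mono (h.map p) := (h.map_distinguished_exact _ hT).mono_g hf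
  obtain ⟨t, rfl⟩ := h.exists_comp_eq_of_mono_map_of_map_eq_zero p g hg
  rw [← assoc, show f ≫ p = 0 from comp_distTriang_mor_zero₁₂ _ hT, zero_comp]
end

section
/- Let h : 𝒯 → 𝒜 be a homology theory that reflects isomorphisms and is full. Let X →γ Z →ω V →ν X[1] be a distinguished triangle in 𝒯, and suppose the morphism h(ν) : h(V) → h(X)[1] admits a section in 𝒜 (i.e., there is μ̂ : h(X)[1] → h(V) with h(ν) ∘ μ̂ = id). Then there exists a morphism μ : X[1] → V in 𝒯 such that the morphism Z ⊕ X[1] → V with components ω and μ is an isomorphism; in particular γ = 0. -/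
/-!
A full functor reflecting isomorphisms lifts the section of `h(ν)` to a section `μ` of `ν`.
A distinguished triangle whose third map is an epimorphism has zero first map, so `γ = 0`,
and `(𝟙, (ω, μ), 𝟙)` is a morphism from the split triangle `Z ⟶ Z ⊞ X⟦1⟧ ⟶ X⟦1⟧ ⟶ Z⟦1⟧` to
the rotated triangle; its middle component is an isomorphism since the outer two are.
-/

open CategoryTheory Category Limits Pretriangulated

namespace CategoryTheory

lemma Functor.isSplitEpi_of_isSplitEpi_map {C D : Type*} [Category C] [Category D]
    (F : C ⥤ D) [F.Full] [F.ReflectsIsomorphisms] {X Y : C} (f : X ⟶ Y)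
    [IsSplitEpi (F.map f)] : IsSplitEpi f := by
  obtain ⟨s, hs⟩ := F.map_surjective (section_ (F.map f))
  have : IsIso (F.map (s ≫ f)) := by
    rw [F.map_comp, hs, IsSplitEpi.id]
    infer_instance
  have : IsIso (s ≫ f) := isIso_of_reflects_iso _ F
  exact IsSplitEpi.mk' ⟨CategoryTheory.inv (s ≫ f) ≫ s, by rw [assoc, IsIso.inv_hom_id]⟩

namespace Pretriangulated

variable {C : Type*} [Category C] [HasZeroObject C] [HasShift C ℤ] [Preadditive C]
  [∀ n : ℤ, (shiftFunctor C n).Additive] [Pretriangulated C]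

lemma isIso_biprod_desc_of_comp_mor₃_eq_id (T : Triangle C) (hT : T ∈ distTriang C)
    (μ : T.obj₁⟦(1 : ℤ)⟧ ⟶ T.obj₃) (hμ : μ ≫ T.mor₃ = 𝟙 _) :
    IsIso (biprod.desc T.mor₂ μ) := by
  have hmor₁ : T.mor₁ = 0 :=
    T.mor₁_eq_zero_of_epi₃ hT (IsSplitEpi.mk' ⟨μ, hμ⟩).epi
  let φ : binaryBiproductTriangle T.obj₂ (T.obj₁⟦(1 : ℤ)⟧) ⟶ T.rotate :=
    { hom₁ := 𝟙 T.obj₂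
      hom₂ := biprod.desc T.mor₂ μ
      hom₃ := 𝟙 (T.obj₁⟦(1 : ℤ)⟧)
      comm₁ := by simp [binaryBiproductTriangle, Triangle.mk, Triangle.rotate]
      comm₂ := by
        dsimp [binaryBiproductTriangle, Triangle.mk, Triangle.rotate]
        ext
        · simpa using (comp_distTriang_mor_zero₂₃ T hT).symm
        · simpa using hμ.symm
      comm₃ := by simp [binaryBiproductTriangle, Triangle.mk, Triangle.rotate, hmor₁] }
  exact isIso₂_of_isIso₁₃ φ (binaryBiproductTriangle_distinguished _ _) (rot_of_distTriang T hT)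
    (inferInstanceAs (IsIso (𝟙 _))) (inferInstanceAs (IsIso (𝟙 _)))

end Pretriangulated

end CategoryTheory

/-- Let `h` be a homology theory that reflects isomorphisms and is full.
Given a distinguished triangle `X ⟶ Z ⟶ V ⟶ X⟦1⟧` such that `h(ν) : h(V) ⟶ h(X)⟦1⟧`
admits a section in `𝒜`, there is `μ : X⟦1⟧ ⟶ V` such that `(ω, μ) : Z ⊞ X⟦1⟧ ⟶ V`
is an isomorphism; in particular `γ = 0`. -/
theorem section_gives_splitting
    {T : Type*} [Category T] [HasZeroObject T] [Preadditive T] [HasShift T ℤ]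
    [∀ n : ℤ, (shiftFunctor T n).Additive] [Pretriangulated T]
    {A : Type*} [Category A] [Abelian A] [HasShift A ℤ]
    [∀ n : ℤ, (shiftFunctor A n).Additive]
    (h : T ⥤ A) [h.Additive] [h.CommShift ℤ] [h.IsHomological]
    [h.ReflectsIsomorphisms] [h.Full]
    {X Z V : T} (γ : X ⟶ Z) (ω : Z ⟶ V) (ν : V ⟶ X⟦(1:ℤ)⟧)
    (hT : Triangle.mk γ ω ν ∈ distTriang T)
    (μhat : (h.obj X)⟦(1:ℤ)⟧ ⟶ h.obj V)
    (hμ : μhat ≫ (h.map ν ≫ (h.commShiftIso (1:ℤ)).hom.app X) = 𝟙 ((h.obj X)⟦(1:ℤ)⟧)) :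
    (∃ μ : X⟦(1:ℤ)⟧ ⟶ V, IsIso (biprod.desc ω μ)) ∧ γ = 0 := by
  have : IsSplitEpi (h.map ν ≫ (h.commShiftIso (1:ℤ)).hom.app X) := IsSplitEpi.mk' ⟨μhat, hμ⟩
  have : IsSplitEpi (h.map ν) := by
    simpa using (inferInstance :
      IsSplitEpi ((h.map ν ≫ (h.commShiftIso (1:ℤ)).hom.app X) ≫ (h.commShiftIso (1:ℤ)).inv.app X))
  have : IsSplitEpi ν := h.isSplitEpi_of_isSplitEpi_map ν
  exact ⟨⟨section_ ν, isIso_biprod_desc_of_comp_mor₃_eq_id _ hT _ (IsSplitEpi.id ν)⟩,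
    Triangle.mor₁_eq_zero_of_epi₃ _ hT (inferInstanceAs (Epi ν))⟩
end

section
/- Let h : 𝒯 → 𝒜 be a homology theory and let α : X → Y be a morphism in 𝒯 with h(α) = 0. If X →α Y →β Z →γ X[1] and X →α Y →β' Z' →γ' X[1] are two distinguished triangles with first morphism α, then the two resulting short exact sequences 0 → h(Y) → h(Z) → h(X)[1] → 0 and 0 → h(Y) → h(Z') → h(X)[1] → 0 are equivalent extensions of h(X)[1] by h(Y): there is an isomorphism h(Z) → h(Z') in 𝒜 commuting with the maps from h(Y) and to h(X)[1]. -/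
open CategoryTheory Category Limits Pretriangulated

lemma Pretriangulated.exists_iso_obj₃_of_same_mor₁ {C : Type*} [Category C] [HasZeroObject C]
    [Preadditive C] [HasShift C ℤ] [∀ n : ℤ, (shiftFunctor C n).Additive] [Pretriangulated C]
    {X Y Z Z' : C} {α : X ⟶ Y} {β : Y ⟶ Z} {γ : Z ⟶ X⟦(1:ℤ)⟧} {β' : Y ⟶ Z'}
    {γ' : Z' ⟶ X⟦(1:ℤ)⟧} (hT : Triangle.mk α β γ ∈ distTriang C)
    (hT' : Triangle.mk α β' γ' ∈ distTriang C) :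
    ∃ e : Z ≅ Z', β ≫ e.hom = β' ∧ e.hom ≫ γ' = γ := by
  let e := isoTriangleOfIso₁₂ _ _ hT hT' (Iso.refl X) (Iso.refl Y)
    ((comp_id α).trans (id_comp α).symm)
  let e₃ : Z ≅ Z' := Triangle.π₃.mapIso e
  -- restated over `Z`, `Z'`: `simp` does not see through the objects of `Triangle.mk`
  have comm₂ : β ≫ e₃.hom = 𝟙 Y ≫ β' := e.hom.comm₂
  have comm₃ : γ ≫ (𝟙 X)⟦(1:ℤ)⟧' = e₃.hom ≫ γ' := e.hom.comm₃
  exact ⟨e₃, by simpa using comm₂, by simpa using comm₃.symm⟩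

/-- For a homology theory `h` and `α : X ⟶ Y` with `h(α) = 0`,
any two distinguished triangles on `α` induce equivalent extensions of `h(X)⟦1⟧`
by `h(Y)`: there is an isomorphism `h(Z) ≅ h(Z')` commuting with the maps from
`h(Y)` and to `h(X)⟦1⟧` (equivalently, to `h(X⟦1⟧)`). -/
theorem extension_class_well_defined
    {T : Type*} [Category T] [HasZeroObject T] [Preadditive T] [HasShift T ℤ]
    [∀ n : ℤ, (shiftFunctor T n).Additive] [Pretriangulated T]
    {A : Type*} [Category A] [Abelian A] [HasShift A ℤ]
    [∀ n : ℤ, (shiftFunctor A n).Additive]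
    (h : T ⥤ A) [h.Additive] [h.CommShift ℤ] [h.IsHomological]
    {X Y Z Z' : T} (α : X ⟶ Y) (hα : h.map α = 0)
    (β : Y ⟶ Z) (γ : Z ⟶ X⟦(1:ℤ)⟧) (hT : Triangle.mk α β γ ∈ distTriang T)
    (β' : Y ⟶ Z') (γ' : Z' ⟶ X⟦(1:ℤ)⟧) (hT' : Triangle.mk α β' γ' ∈ distTriang T) :
    ∃ e : h.obj Z ≅ h.obj Z',
      h.map β ≫ e.hom = h.map β' ∧ e.hom ≫ h.map γ' = h.map γ := by
  obtain ⟨e, hβ, hγ⟩ := Pretriangulated.exists_iso_obj₃_of_same_mor₁ hT hT'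
  exact ⟨h.mapIso e, by simp [← h.map_comp, hβ], by simp [← h.map_comp, hγ]⟩
end

section
/- Let h : 𝒯 → 𝒜 be a homology theory that reflects isomorphisms and is full. Let α : X → Y satisfy h(α) = 0 and let X →α Y →β Z →γ X[1] be a distinguished triangle. If the induced short exact sequence 0 → h(Y) → h(Z) → h(X)[1] → 0 splits in 𝒜 (i.e., h(γ) : h(Z) → h(X)[1] admits a section), then α = 0. -/
open CategoryTheory Category Limits Pretriangulated

/-- Let `h` be a homology theory that reflects isomorphisms and is full.
If `h(α) = 0`, `X ⟶α Y ⟶β Z ⟶γ X⟦1⟧` is a distinguished triangle and the induced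
short exact sequence `0 ⟶ h(Y) ⟶ h(Z) ⟶ h(X)⟦1⟧ ⟶ 0` splits (i.e. `h(γ)` admits
a section), then `α = 0`. -/
theorem eq_zero_of_splitting
    {T : Type*} [Category T] [HasZeroObject T] [Preadditive T] [HasShift T ℤ]
    [∀ n : ℤ, (shiftFunctor T n).Additive] [Pretriangulated T]
    {A : Type*} [Category A] [Abelian A] [HasShift A ℤ]
    [∀ n : ℤ, (shiftFunctor A n).Additive]
    (h : T ⥤ A) [h.Additive] [h.CommShift ℤ] [h.IsHomological]
    [h.ReflectsIsomorphisms] [h.Full]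
    {X Y Z : T} (α : X ⟶ Y) (β : Y ⟶ Z) (γ : Z ⟶ X⟦(1:ℤ)⟧)
    (hα : h.map α = 0) (hT : Triangle.mk α β γ ∈ distTriang T)
    (s : (h.obj X)⟦(1:ℤ)⟧ ⟶ h.obj Z)
    (hs : s ≫ (h.map γ ≫ (h.commShiftIso (1:ℤ)).hom.app X) = 𝟙 ((h.obj X)⟦(1:ℤ)⟧)) :
    α = 0 := by
  obtain ⟨t, ht⟩ := h.map_surjective ((h.commShiftIso (1:ℤ)).hom.app X ≫ s)
  have hsγ : s ≫ h.map γ = (h.commShiftIso (1:ℤ)).inv.app X := by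
    rw [← cancel_mono ((h.commShiftIso (1:ℤ)).hom.app X), assoc, hs]
    simp
  have htγ : h.map (t ≫ γ) = 𝟙 _ := by
    rw [h.map_comp, ht, assoc, hsγ]
    simp
  have : IsIso (h.map (t ≫ γ)) := by rw [htγ]; infer_instance
  have : IsIso (t ≫ γ) := isIso_of_reflects_iso (t ≫ γ) h
  have hzero : γ ≫ α⟦(1:ℤ)⟧' = 0 := comp_distTriang_mor_zero₃₁ _ hT
  have : α⟦(1:ℤ)⟧' = 0 := by
    rw [← cancel_epi (t ≫ γ), assoc, hzero, comp_zero, comp_zero]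
  apply (shiftFunctor T (1:ℤ)).map_injective
  simpa using this
end

section
/- Let h : 𝒯 → 𝒜 be a homology theory that reflects isomorphisms and is full. Let X, Y, Z be objects of 𝒯 and let 0 → h(Y) →σ h(Z) →τ h(X)[1] → 0 be a short exact sequence in 𝒜. Then there exist a morphism α : X → Y with h(α) = 0 and a distinguished triangle X →α Y →β Z →γ X[1] in 𝒯 such that h(β) = σ and h(γ) = τ (via the natural isomorphism h(X[1]) ≅ h(X)[1]). -/
/-!
Lift `σ` to `β : Y ⟶ Z` and complete it to a distinguished triangle `X' ⟶ Y ⟶ Z ⟶ X'⟦1⟧`.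
As `h(β)` is mono, `h` kills `X' ⟶ Y` and hence its shift, so `h` turns this triangle into a
short exact sequence `0 ⟶ h(Y) ⟶ h(Z) ⟶ h(X')⟦1⟧ ⟶ 0` with the same first map as the given one.
Comparing cokernels gives `h(X'⟦1⟧) ≅ h(X⟦1⟧)` compatibly with `τ`; since `h` is full and
conservative this lifts to `X'⟦1⟧ ≅ X⟦1⟧`, hence to `X' ≅ X`, along which the triangle is
transported.
-/

open CategoryTheory Category Limits Pretriangulated

namespace CategoryTheory

lemma ShortComplex.ShortExact.exists_iso_comp_eq {A : Type*} [Category A] [Abelian A]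
    {X₁ X₂ X₃ X₃' : A} {f : X₁ ⟶ X₂} {g : X₂ ⟶ X₃} {g' : X₂ ⟶ X₃'} {w : f ≫ g = 0}
    {w' : f ≫ g' = 0} (hS : (ShortComplex.mk f g w).ShortExact)
    (hS' : (ShortComplex.mk f g' w').ShortExact) : ∃ e : X₃ ≅ X₃', g ≫ e.hom = g' :=
  ⟨IsColimit.coconePointUniqueUpToIso hS.gIsCokernel hS'.gIsCokernel,
    IsColimit.comp_coconePointUniqueUpToIso_hom hS.gIsCokernel hS'.gIsCokernel
      WalkingParallelPair.one⟩

lemma Functor.exists_iso_map_hom_eq {C D : Type*} [Category C] [Category D] (F : C ⥤ D)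
    [F.Full] [F.ReflectsIsomorphisms] {P Q : C} (φ : F.obj P ≅ F.obj Q) :
    ∃ e : P ≅ Q, F.map e.hom = φ.hom := by
  obtain ⟨u, hu⟩ := F.map_surjective φ.hom
  have : IsIso (F.map u) := hu ▸ inferInstance
  have : IsIso u := isIso_of_reflects_iso u F
  exact ⟨asIso u, hu⟩

lemma Functor.map_shiftFunctor_map_eq_zero {C D M : Type*} [Category C] [Category D]
    [HasZeroMorphisms D] [AddMonoid M] [HasShift C M] [HasShift D M]
    [∀ n : M, (shiftFunctor D n).PreservesZeroMorphisms] (F : C ⥤ D) [F.CommShift M]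
    {X Y : C} {f : X ⟶ Y} (hf : F.map f = 0) (n : M) : F.map (f⟦n⟧') = 0 := by
  rw [← cancel_mono ((F.commShiftIso n).hom.app Y), F.commShiftIso_hom_naturality, hf]
  simp

variable {C : Type*} [Category C] [HasZeroObject C] [Preadditive C] [HasShift C ℤ]
  [∀ n : ℤ, (shiftFunctor C n).Additive] [Pretriangulated C]

lemma Pretriangulated.distinguished_mk_of_iso_obj₁ {X X' Y Z : C} {α : X ⟶ Y} {β : Y ⟶ Z}
    {γ : Z ⟶ X⟦(1 : ℤ)⟧} (hT : Triangle.mk α β γ ∈ distTriang C) (e : X' ≅ X) :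
    Triangle.mk (e.hom ≫ α) β (γ ≫ e.inv⟦(1 : ℤ)⟧') ∈ distTriang C :=
  isomorphic_distinguished _ hT _ <|
    Triangle.isoMk _ _ e (Iso.refl _) (Iso.refl _) (by simp [Triangle.mk])
      (by simp [Triangle.mk]) (by simp [Triangle.mk, ← Functor.map_comp])

lemma Functor.map_mor₁_eq_zero_of_mono_map_mor₂ {A : Type*} [Category A] [HasZeroMorphisms A]
    (F : C ⥤ A) [F.PreservesZeroMorphisms] {X Y Z : C} {α : X ⟶ Y} {β : Y ⟶ Z}
    {γ : Z ⟶ X⟦(1 : ℤ)⟧} (hT : Triangle.mk α β γ ∈ distTriang C) [Mono (F.map β)] :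
    F.map α = 0 := by
  rw [← cancel_mono (F.map β), ← F.map_comp,
    show α ≫ β = 0 from comp_distTriang_mor_zero₁₂ _ hT]
  simp

variable {A : Type*} [Category A] [Abelian A] [HasShift A ℤ]
  [∀ n : ℤ, (shiftFunctor A n).Additive]
  (F : C ⥤ A) [F.Additive] [F.CommShift ℤ] [F.IsHomological]
  {X Y Z : C} {α : X ⟶ Y} {β : Y ⟶ Z} {γ : Z ⟶ X⟦(1 : ℤ)⟧}

lemma Functor.epi_map_mor₃_of_mono_map_mor₂ (hT : Triangle.mk α β γ ∈ distTriang C)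
    [Mono (F.map β)] : Epi (F.map γ) :=
  (F.map_distinguished_exact _ (rot_of_distTriang _ (rot_of_distTriang _ hT))).epi_f <| by
    show F.map (-α⟦(1 : ℤ)⟧') = 0
    rw [F.map_neg, F.map_shiftFunctor_map_eq_zero (F.map_mor₁_eq_zero_of_mono_map_mor₂ hT),
      neg_zero]

lemma Functor.shortExact_map_of_mono_map_mor₂ (hT : Triangle.mk α β γ ∈ distTriang C)
    [Mono (F.map β)] :
    (ShortComplex.mk (F.map β) (F.map γ ≫ (F.commShiftIso (1 : ℤ)).hom.app X) (by
      rw [← F.map_comp_assoc, show β ≫ γ = 0 from comp_distTriang_mor_zero₂₃ _ hT]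
      simp)).ShortExact := by
  have : Epi (F.map γ) := F.epi_map_mor₃_of_mono_map_mor₂ hT
  refine ShortComplex.shortExact_of_iso ?_
    (.mk' (F.map_distinguished_exact _ (rot_of_distTriang _ hT)) ‹_› ‹_›)
  exact ShortComplex.isoMk (Iso.refl _) (Iso.refl _) ((F.commShiftIso (1 : ℤ)).app X)
    ((id_comp _).trans (comp_id _).symm) (id_comp _)

end CategoryTheory

/-- Let `h` be a homology theory that reflects isomorphisms and is full.
Any short exact sequence `0 ⟶ h(Y) ⟶σ h(Z) ⟶τ h(X)⟦1⟧ ⟶ 0` in `𝒜` is realized by a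
distinguished triangle `X ⟶α Y ⟶β Z ⟶γ X⟦1⟧` with `h(α) = 0`, `h(β) = σ` and
`h(γ) = τ` (via the natural isomorphism `h(X⟦1⟧) ≅ h(X)⟦1⟧`). -/
theorem distTriang_realizing_extension
    {T : Type*} [Category T] [HasZeroObject T] [Preadditive T] [HasShift T ℤ]
    [∀ n : ℤ, (shiftFunctor T n).Additive] [Pretriangulated T]
    {A : Type*} [Category A] [Abelian A] [HasShift A ℤ]
    [∀ n : ℤ, (shiftFunctor A n).Additive]
    (h : T ⥤ A) [h.Additive] [h.CommShift ℤ] [h.IsHomological]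
    [h.ReflectsIsomorphisms] [h.Full]
    (X Y Z : T) (σ : h.obj Y ⟶ h.obj Z) (τ : h.obj Z ⟶ (h.obj X)⟦(1:ℤ)⟧)
    (w : σ ≫ τ = 0) (hS : (ShortComplex.mk σ τ w).ShortExact) :
    ∃ (α : X ⟶ Y) (β : Y ⟶ Z) (γ : Z ⟶ X⟦(1:ℤ)⟧),
      h.map α = 0 ∧ (Triangle.mk α β γ ∈ distTriang T) ∧
      h.map β = σ ∧ h.map γ ≫ (h.commShiftIso (1:ℤ)).hom.app X = τ := by
  obtain ⟨β, rfl⟩ := h.map_surjective σ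
  obtain ⟨X', α', γ', hT⟩ := distinguished_cocone_triangle₁ β
  have : Mono (h.map β) := hS.mono_f
  obtain ⟨φ, hφ⟩ := (h.shortExact_map_of_mono_map_mor₂ hT).exists_iso_comp_eq hS
  obtain ⟨u, hu⟩ := h.exists_iso_map_hom_eq
    ((h.commShiftIso (1 : ℤ)).app X' ≪≫ φ ≪≫ ((h.commShiftIso (1 : ℤ)).app X).symm)
  let e : X' ≅ X := (shiftEquiv T (1 : ℤ)).fullyFaithfulFunctor.preimageIso u
  have he : e.hom⟦(1 : ℤ)⟧' = u.hom :=
    (shiftEquiv T (1 : ℤ)).fullyFaithfulFunctor.map_preimage u.hom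
  refine ⟨e.inv ≫ α', β, γ' ≫ e.hom⟦(1 : ℤ)⟧', ?_, distinguished_mk_of_iso_obj₁ hT e.symm,
    rfl, ?_⟩
  · simp [h.map_mor₁_eq_zero_of_mono_map_mor₂ hT]
  · simp [he, hu, ← hφ]
end

section
/- Let h : 𝒯 → 𝒜 be a homology theory that reflects isomorphisms, is full, and is essentially surjective (for every object x of 𝒜 there is an object X of 𝒯 with h(X) ≅ x). Then all idempotents in 𝒯 split, i.e., 𝒯 is idempotent complete: for every object X of 𝒯 and every morphism e : X → X with e ∘ e = e, there exist an object Y and morphisms p : X → Y, i : Y → X with i ∘ p = e and p ∘ i = id_Y. -/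
open CategoryTheory Category Limits Pretriangulated

/-- Let `h : 𝒯 ⥤ 𝒜` be a homology theory that reflects isomorphisms, is
full, and is essentially surjective.  Then all idempotents in `𝒯` split: for every
`e : X ⟶ X` with `e ∘ e = e` there are `Y`, `p : X ⟶ Y` and `i : Y ⟶ X` with
`i ∘ p = e` and `p ∘ i = id_Y`. -/
theorem idempotents_split
    {T : Type*} [Category T] [HasZeroObject T] [Preadditive T] [HasShift T ℤ]
    [∀ n : ℤ, (shiftFunctor T n).Additive] [Pretriangulated T]
    {A : Type*} [Category A] [Abelian A] [HasShift A ℤ]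
    [∀ n : ℤ, (shiftFunctor A n).Additive]
    (h : T ⥤ A) [h.Additive] [h.CommShift ℤ] [h.IsHomological]
    [h.ReflectsIsomorphisms] [h.Full] [h.EssSurj]
    (X : T) (e : X ⟶ X) (he : e ≫ e = e) :
    ∃ (Y : T) (p : X ⟶ Y) (i : Y ⟶ X), p ≫ i = e ∧ i ≫ p = 𝟙 Y := by
  -- The image of `e` is an idempotent in the abelian category `A`; it splits there.
  have hA : (h.map e) ≫ (h.map e) = h.map e := by rw [← h.map_comp, he]
  obtain ⟨y, ι, π, hιπ, hπι⟩ :=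
    CategoryTheory.IsIdempotentComplete.idempotents_split (h.obj X) (h.map e) hA
  -- Pick an object `Y` of `T` with `h(Y) ≅ y` and lift the splitting maps.
  let Y : T := h.objPreimage y
  let α : h.obj Y ≅ y := h.objObjPreimageIso y
  obtain ⟨p₀, hp₀⟩ := h.map_surjective (X := X) (Y := Y) (π ≫ α.inv)
  obtain ⟨i, hi⟩ := h.map_surjective (X := Y) (Y := X) (α.hom ≫ ι)
  -- `i ≫ p₀` maps to the identity, hence is an isomorphism.
  have hv : h.map (i ≫ p₀) = 𝟙 _ := by
    rw [h.map_comp, hi, hp₀, assoc, reassoc_of% hιπ]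
    simp
  have : IsIso (h.map (i ≫ p₀)) := by rw [hv]; infer_instance
  have hvi : IsIso (i ≫ p₀) := isIso_of_reflects_iso (i ≫ p₀) h
  -- Correct `p₀` so that `i ≫ p = 𝟙 Y`.
  let p : X ⟶ Y := p₀ ≫ inv (i ≫ p₀)
  have hip : i ≫ p = 𝟙 Y := by
    show i ≫ p₀ ≫ inv (i ≫ p₀) = 𝟙 Y
    rw [← assoc, IsIso.hom_inv_id]
  -- `f := p ≫ i` is a split idempotent with the same image as `e` under `h`.
  let f : X ⟶ X := p ≫ i
  have hff : f ≫ f = f := by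
    have : f ≫ f = p ≫ (i ≫ p) ≫ i := by simp [f]
    rw [this, hip]; simp [f]
  have hmapinv : h.map (inv (i ≫ p₀)) = 𝟙 _ := by
    rw [h.map_inv]
    exact IsIso.inv_eq_of_hom_inv_id (by rw [hv, comp_id])
  have hfe : h.map f = h.map e := by
    have : h.map f = h.map p₀ ≫ h.map (inv (i ≫ p₀)) ≫ h.map i := by
      simp [f, p]
    rw [this, hmapinv, hp₀, hi, id_comp, assoc, ← hπι]
    simp
  -- The idempotents `e` and `f` are conjugate via `u := e ≫ f + (1 - e) ≫ (1 - f)`.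
  let u : X ⟶ X := e ≫ f + (𝟙 X - e) ≫ (𝟙 X - f)
  have hu : h.map u = 𝟙 _ := by
    have : h.map u = h.map e ≫ h.map f +
        (𝟙 _ - h.map e) ≫ (𝟙 _ - h.map f) := by
      simp [u]
    rw [this, hfe, ← hA]
    simp only [Preadditive.sub_comp, Preadditive.comp_sub, comp_id, id_comp, hA]
    abel
  have : IsIso (h.map u) := by rw [hu]; infer_instance
  have hui : IsIso u := isIso_of_reflects_iso u h
  have hcomm : e ≫ u = u ≫ f := by
    simp only [u, Preadditive.comp_add, Preadditive.add_comp,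
      Preadditive.sub_comp, Preadditive.comp_sub, comp_id, id_comp, ← assoc, he]
    simp only [assoc, hff, he]
    abel
  have hconj : u ≫ f ≫ inv u = e := by
    rw [← assoc, ← hcomm, assoc, IsIso.hom_inv_id, comp_id]
  refine ⟨Y, u ≫ p, i ≫ inv u, ?_, ?_⟩
  · have : (u ≫ p) ≫ i ≫ inv u = u ≫ f ≫ inv u := by simp [f]
    rw [this, hconj]
  · rw [assoc, IsIso.inv_hom_id_assoc, hip]
end

section
/- Let h : 𝒯 → 𝒜 be a homology theory that is full. Let U →α V →μ Y →ξ U[1] be a distinguished triangle in 𝒯 such that h(α) is a monomorphism in 𝒜. If P is an object of 𝒯 and λ : P → V is a morphism with h(μ ∘ λ) = 0, then there exists a morphism λ' : P → V such that μ ∘ λ' = μ ∘ λ and h(λ') = 0. -/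
/-!
Since `h(α)` is mono, exactness of `h(U) ⟶ h(V) ⟶ h(Y)` makes `h(U)` the kernel of `h(μ)`, so
`h(λ)` factors as `φ ≫ h(α)`. Fullness gives `φ = h(f)`, and `λ' = λ - f ≫ α` works because
`α ≫ μ = 0`.
-/

open CategoryTheory Category Limits Pretriangulated

namespace CategoryTheory.Functor

variable {C A : Type*} [Category C] [HasZeroObject C] [Preadditive C] [HasShift C ℤ]
  [∀ n : ℤ, (shiftFunctor C n).Additive] [Pretriangulated C] [Category A] [Abelian A]
  (F : C ⥤ A) [F.IsHomological]

lemma exists_comp_map_mor₁_eq_of_comp_map_mor₂_eq_zero (T : Triangle C) (hT : T ∈ distTriang C)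
    [Mono (F.map T.mor₁)] {X : A} (k : X ⟶ F.obj T.obj₂) (hk : k ≫ F.map T.mor₂ = 0) :
    ∃ φ : X ⟶ F.obj T.obj₁, φ ≫ F.map T.mor₁ = k :=
  have : Mono ((shortComplexOfDistTriangle T hT).map F).f := ‹_›
  (F.map_distinguished_exact T hT).lift' k hk

lemma exists_comp_mor₂_eq_and_map_eq_zero [F.Full] [F.Additive] (T : Triangle C)
    (hT : T ∈ distTriang C) [Mono (F.map T.mor₁)] {P : C} (l : P ⟶ T.obj₂)
    (hl : F.map (l ≫ T.mor₂) = 0) :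
    ∃ l' : P ⟶ T.obj₂, l' ≫ T.mor₂ = l ≫ T.mor₂ ∧ F.map l' = 0 := by
  obtain ⟨φ, hφ⟩ := F.exists_comp_map_mor₁_eq_of_comp_map_mor₂_eq_zero T hT (F.map l)
    (by rw [← F.map_comp, hl])
  obtain ⟨f, rfl⟩ := F.map_surjective φ
  refine ⟨l - f ≫ T.mor₁, ?_, ?_⟩
  · rw [Preadditive.sub_comp, assoc, comp_distTriang_mor_zero₁₂ T hT, comp_zero, sub_zero]
  · rw [F.map_sub, F.map_comp, hφ, sub_self]

end CategoryTheory.Functor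

/-- Let `h` be a full homology theory and `U ⟶α V ⟶μ Y ⟶ξ U⟦1⟧` a
distinguished triangle with `h(α)` a monomorphism.  If `λ : P ⟶ V` satisfies
`h(μ ∘ λ) = 0`, then there is `λ' : P ⟶ V` with `μ ∘ λ' = μ ∘ λ` and `h(λ') = 0`. -/
theorem lift_correction
    {T : Type*} [Category T] [HasZeroObject T] [Preadditive T] [HasShift T ℤ]
    [∀ n : ℤ, (shiftFunctor T n).Additive] [Pretriangulated T]
    {A : Type*} [Category A] [Abelian A] [HasShift A ℤ]
    [∀ n : ℤ, (shiftFunctor A n).Additive]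
    (h : T ⥤ A) [h.Additive] [h.CommShift ℤ] [h.IsHomological] [h.Full]
    {U V Y : T} (α : U ⟶ V) (μ : V ⟶ Y) (ξ : Y ⟶ U⟦(1:ℤ)⟧)
    (hT : Triangle.mk α μ ξ ∈ distTriang T)
    (hmono : Mono (h.map α))
    (P : T) (l : P ⟶ V) (hl : h.map (l ≫ μ) = 0) :
    ∃ l' : P ⟶ V, l' ≫ μ = l ≫ μ ∧ h.map l' = 0 := by
  have : Mono (h.map (Triangle.mk α μ ξ).mor₁) := hmono
  exact h.exists_comp_mor₂_eq_and_map_eq_zero _ hT l hl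
end
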